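/- Let G be a discrete group and φ a completely bounded multiplier of A(G). Then j₁ ∘ M̄_φ = m_{φ̌} ∘ j₁ on C*_red(G); that is, (M̄_φ, m_{φ̌}) is a compatible pair of completely bounded maps on the compatible couple (C*_red(G), L₁(VN(G))). -/

import Mathlib

open Filter Topology
open scoped ENNReal Classical

noncomputable section

/-! ### Abstract operator spaces

An (abstract) operator space is a complex normed space equipped with a sequence of
matrix norms satisfying (part of) Ruan's axioms, together with an abstract
stabilization `X ⊗̌ K(ℓ₂)` into which all the matrix levels `Mₙ(X)` embed
isometrically and with dense union. -/

structure OpSpace : Type 1 where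
  X : Type
  [grp : NormedAddCommGroup X]
  [mod : NormedSpace ℂ X]
  /-- the norm on `Mₙ(X)` -/
  matNorm : (n : ℕ) → Matrix (Fin n) (Fin n) X → ℝ
  matNorm_nonneg : ∀ n x, 0 ≤ matNorm n x
  matNorm_one : ∀ v, matNorm 1 (fun _ _ => v) = ‖v‖
  matNorm_add : ∀ n x y, matNorm n (x + y) ≤ matNorm n x + matNorm n y
  matNorm_smul : ∀ (n : ℕ) (c : ℂ) x, matNorm n (c • x) = ‖c‖ * matNorm n x
  /-- the stabilization `X ⊗̌ K(ℓ₂)` -/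
  stab : Type
  [stabGrp : NormedAddCommGroup stab]
  [stabMod : NormedSpace ℂ stab]
  /-- the canonical embedding of `Mₙ(X)` into `X ⊗̌ K(ℓ₂)` -/
  emb : (n : ℕ) → Matrix (Fin n) (Fin n) X → stab
  emb_norm : ∀ n x, ‖emb n x‖ = matNorm n x
  emb_add : ∀ n x y, emb n (x + y) = emb n x + emb n y
  emb_dense : DenseRange fun q : (Σ n : ℕ, Matrix (Fin n) (Fin n) X) => emb q.1 q.2

attribute [instance] OpSpace.grp OpSpace.mod OpSpace.stabGrp OpSpace.stabMod

/-- entrywise amplification `T ⊗ id_{Mₙ}` of a linear map to matrices -/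
def matAmp {V W : OpSpace} (T : V.X →ₗ[ℂ] W.X) (n : ℕ)
    (x : Matrix (Fin n) (Fin n) V.X) : Matrix (Fin n) (Fin n) W.X :=
  fun i j => T (x i j)

/-- `T` is completely bounded with bound `c` -/
def IsCBBound {V W : OpSpace} (T : V.X →ₗ[ℂ] W.X) (c : ℝ) : Prop :=
  ∀ n x, W.matNorm n (matAmp T n x) ≤ c * V.matNorm n x

def CompletelyBounded {V W : OpSpace} (T : V.X →ₗ[ℂ] W.X) : Prop :=
  ∃ c, 0 ≤ c ∧ IsCBBound T c

/-- the completely bounded norm `‖T‖_cb` -/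
noncomputable def cbNorm {V W : OpSpace} (T : V.X →ₗ[ℂ] W.X) : ℝ :=
  sInf {c | 0 ≤ c ∧ IsCBBound T c}

/-- `T` is a complete isometry -/
def CompletelyIsometric {V W : OpSpace} (T : V.X →ₗ[ℂ] W.X) : Prop :=
  ∀ n x, W.matNorm n (matAmp T n x) = V.matNorm n x

def FiniteRank {V W : OpSpace} (T : V.X →ₗ[ℂ] W.X) : Prop :=
  FiniteDimensional ℂ (LinearMap.range T)

/-- `y = (T ⊗ id_{K(ℓ₂)}) x` for elements `x, y` of the stabilizations. -/
def IsAmpImage {V W : OpSpace} (T : V.X →ₗ[ℂ] W.X) (x : V.stab) (y : W.stab) : Prop :=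
  ∀ ε > (0 : ℝ), ∃ δ > (0 : ℝ), ∀ (n : ℕ) (z : Matrix (Fin n) (Fin n) V.X),
    ‖V.emb n z - x‖ < δ → ‖W.emb n (matAmp T n z) - y‖ < ε

/-- the value `(T ⊗ id_{K(ℓ₂)}) x` (defined via choice when it exists) -/
noncomputable def ampImage {V W : OpSpace} (T : V.X →ₗ[ℂ] W.X) (x : V.stab) : W.stab :=
  if h : ∃ y, IsAmpImage T x y then h.choose else 0

/-- a net of maps converges to the identity in the stable point-norm topology:
`‖(T_α ⊗ id_∞)(x) − x‖ → 0` for every `x ∈ V ⊗̌ K(ℓ₂)`. -/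
def StableTendstoId {V : OpSpace} {ι : Type} (l : Filter ι)
    (T : ι → (V.X →ₗ[ℂ] V.X)) : Prop :=
  ∀ x : V.stab, ∃ y : ι → V.stab,
    (∀ i, IsAmpImage (T i) x (y i)) ∧ Tendsto y l (nhds x)

/-- the operator space approximation property (OAP): a net of finite-rank maps
converging to the identity in the stable point-norm topology. -/
def HasOAP (V : OpSpace) : Prop :=
  ∃ (ι : Type) (l : Filter ι), l.NeBot ∧
    ∃ T : ι → (V.X →ₗ[ℂ] V.X),
      (∀ i, FiniteRank (T i) ∧ CompletelyBounded (T i)) ∧ StableTendstoId l T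

/-- CBAP witnessed by finite-rank maps of cb-norm at most `c`, converging to the
identity in the point-norm topology. -/
def CBAPwith (V : OpSpace) (c : ℝ) : Prop :=
  ∃ (ι : Type) (l : Filter ι), l.NeBot ∧
    ∃ T : ι → (V.X →ₗ[ℂ] V.X),
      (∀ i, FiniteRank (T i) ∧ IsCBBound (T i) c) ∧
      ∀ v : V.X, Tendsto (fun i => T i v) l (nhds v)

/-- the completely bounded approximation property -/
def HasCBAP (V : OpSpace) : Prop := ∃ c : ℝ, CBAPwith V c

/-- the CBAP constant `Λ(V)` -/
noncomputable def cbapConst (V : OpSpace) : ℝ≥0∞ :=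
  sInf {e | ∃ c : ℝ, CBAPwith V c ∧ e = ENNReal.ofReal c}

/-- the completely contractive approximation property: `Λ(V) = 1` -/
def HasCCAP (V : OpSpace) : Prop := cbapConst V ≤ 1

/-! ### Complex interpolation of compatible couples of operator spaces -/

def unitStrip : Set ℂ := {z | 0 ≤ z.re ∧ z.re ≤ 1}

def unitOpenStrip : Set ℂ := {z | 0 < z.re ∧ z.re < 1}

/-- A compatible couple of operator spaces: both are continuously and injectively
embedded in an ambient complex normed space `Z`. -/
structure Couple : Type 1 where
  Z : Type
  [zgrp : NormedAddCommGroup Z]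
  [zmod : NormedSpace ℂ Z]
  V : OpSpace
  W : OpSpace
  iV : V.X →ₗ[ℂ] Z
  iW : W.X →ₗ[ℂ] Z
  iV_inj : Function.Injective iV
  iW_inj : Function.Injective iW
  iV_cont : Continuous iV
  iW_cont : Continuous iW

attribute [instance] Couple.zgrp Couple.zmod

/-- the norm of `V + W` -/
noncomputable def Couple.sumNorm (C : Couple) (z : C.Z) : ℝ :=
  sInf {r | ∃ v w, z = C.iV v + C.iW w ∧ r = ‖v‖ + ‖w‖}

/-- the `V`-norm of the boundary value of `f` at `it`, the boundary value being
constrained to have entries in `SV` -/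
noncomputable def bdryNormV (C : Couple) (SV : Set C.V.X) (n : ℕ)
    (f : ℂ → Matrix (Fin n) (Fin n) C.Z) (t : ℝ) : ℝ :=
  sInf {r | ∃ x : Matrix (Fin n) (Fin n) C.V.X,
    (∀ i j, x i j ∈ SV) ∧ (∀ i j, C.iV (x i j) = f (Complex.I * (t : ℂ)) i j) ∧
    r = C.V.matNorm n x}

/-- the `W`-norm of the boundary value of `f` at `1 + it` -/
noncomputable def bdryNormW (C : Couple) (SW : Set C.W.X) (n : ℕ)
    (f : ℂ → Matrix (Fin n) (Fin n) C.Z) (t : ℝ) : ℝ :=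
  sInf {r | ∃ y : Matrix (Fin n) (Fin n) C.W.X,
    (∀ i j, y i j ∈ SW) ∧ (∀ i j, C.iW (y i j) = f (1 + Complex.I * (t : ℂ)) i j) ∧
    r = C.W.matNorm n y}

/-- an admissible analytic family on the strip for the Calderón interpolation
method, at the `n`-th matrix level. -/
def AnalyticFamily (C : Couple) (SV : Set C.V.X) (SW : Set C.W.X) (n : ℕ)
    (f : ℂ → Matrix (Fin n) (Fin n) C.Z) : Prop :=
  (∀ i j, ContinuousOn (fun z => f z i j) unitStrip) ∧
  (∀ i j, DifferentiableOn ℂ (fun z => f z i j) unitOpenStrip) ∧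
  (∃ M : ℝ, ∀ z ∈ unitStrip, ∀ i j, C.sumNorm (f z i j) ≤ M) ∧
  (∀ t : ℝ, ∃ x : Matrix (Fin n) (Fin n) C.V.X,
    (∀ i j, x i j ∈ SV) ∧ ∀ i j, C.iV (x i j) = f (Complex.I * (t : ℂ)) i j) ∧
  (∀ t : ℝ, ∃ y : Matrix (Fin n) (Fin n) C.W.X,
    (∀ i j, y i j ∈ SW) ∧ ∀ i j, C.iW (y i j) = f (1 + Complex.I * (t : ℂ)) i j) ∧
  Tendsto (bdryNormV C SV n f) (Filter.cocompact ℝ) (nhds 0) ∧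
  Tendsto (bdryNormW C SW n f) (Filter.cocompact ℝ) (nhds 0)

noncomputable def famNorm (C : Couple) (SV : Set C.V.X) (SW : Set C.W.X) (n : ℕ)
    (f : ℂ → Matrix (Fin n) (Fin n) C.Z) : ℝ :=
  max (⨆ t : ℝ, bdryNormV C SV n f t) (⨆ t : ℝ, bdryNormW C SW n f t)

/-- the norm of `Mₙ((V, W)_θ)`, computed on representatives in the ambient space -/
noncomputable def interpMatNorm (C : Couple) (SV : Set C.V.X) (SW : Set C.W.X)
    (θ : ℝ) (n : ℕ) (x : Matrix (Fin n) (Fin n) C.Z) : ℝ :=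
  sInf {r | ∃ f, AnalyticFamily C SV SW n f ∧ f (θ : ℂ) = x ∧ r = famNorm C SV SW n f}

/-- membership in the interpolation space `(V, W)_θ ⊆ V + W` -/
def MemInterp (C : Couple) (SV : Set C.V.X) (SW : Set C.W.X) (θ : ℝ) (z : C.Z) : Prop :=
  ∃ f, AnalyticFamily C SV SW 1 f ∧ f (θ : ℂ) = fun _ _ => z

/-! ### C*-algebras, the weak expectation property and QWEP -/

/-- a bundled (unital) C*-algebra over `ℂ` -/
structure CStarAlg : Type 1 where
  X : Type
  [ring : NormedRing X]
  [salg : StarRing X]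
  [cstar : CStarRing X]
  [alg : NormedAlgebra ℂ X]
  [complete : CompleteSpace X]
  [smod : StarModule ℂ X]

attribute [instance] CStarAlg.ring CStarAlg.salg CStarAlg.cstar CStarAlg.alg
  CStarAlg.complete CStarAlg.smod

/-- a bundled complex Hilbert space -/
structure HilbertSp : Type 1 where
  H : Type
  [grp : NormedAddCommGroup H]
  [ip : InnerProductSpace ℂ H]
  [complete : CompleteSpace H]

attribute [instance] HilbertSp.grp HilbertSp.ip HilbertSp.complete

def IsPosElem {A : Type} [NonUnitalSemiring A] [StarRing A] (x : A) : Prop :=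
  ∃ y, x = star y * y

/-- complete positivity of a linear map between C*-algebras -/
def IsCPMap {A B : Type} [NormedRing A] [StarRing A] [NormedAlgebra ℂ A]
    [NormedRing B] [StarRing B] [NormedAlgebra ℂ B] (T : A →ₗ[ℂ] B) : Prop :=
  ∀ (n : ℕ) (x : Matrix (Fin n) (Fin n) A), IsPosElem x → IsPosElem (x.map ⇑T)

/-- Lance's weak expectation property: for a faithful representation
`π : A → B(H)` there is a completely positive contraction `P : B(H) → π(A)''`
with `P ∘ π = π`. -/
def HasWEP (A : CStarAlg) : Prop :=
  ∃ (K : HilbertSp) (π : A.X →⋆ₐ[ℂ] (K.H →L[ℂ] K.H)),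
    Isometry ⇑π ∧
    ∃ P : (K.H →L[ℂ] K.H) →ₗ[ℂ] (K.H →L[ℂ] K.H),
      IsCPMap P ∧ (∀ x, ‖P x‖ ≤ ‖x‖) ∧
      (∀ x, P x ∈ Set.centralizer (Set.centralizer (Set.range ⇑π))) ∧
      ∀ a, P (π a) = π a

/-- QWEP: a quotient of a C*-algebra with the weak expectation property -/
def HasQWEP (A : CStarAlg) : Prop :=
  ∃ B : CStarAlg, HasWEP B ∧ ∃ q : B.X →⋆ₐ[ℂ] A.X, Function.Surjective ⇑q

/-! ### Von Neumann algebras with a (normal faithful) tracial state and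
their noncommutative `L_p`-spaces -/

structure TracialVNSetting : Type 1 where
  /-- the von Neumann algebra `R` (as a C*-algebra) -/
  R : CStarAlg
  /-- the tracial state `τ` -/
  τ : R.X →ₗ[ℂ] ℂ
  τ_one : τ 1 = 1
  τ_pos : ∀ x : R.X, 0 ≤ (τ (star x * x)).re ∧ (τ (star x * x)).im = 0
  τ_faithful : ∀ x : R.X, τ (star x * x) = 0 → x = 0
  τ_tracial : ∀ x y : R.X, τ (x * y) = τ (y * x)
  /-- `R` as an operator space -/
  Ros : OpSpace
  rEquiv : Ros.X ≃ₗ[ℂ] R.X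
  rEquiv_norm : ∀ x, ‖rEquiv x‖ = ‖x‖
  /-- `L₁(R) = (R_*)^{op}` -/
  L1 : OpSpace
  /-- the trace embedding `j₁ : R → L₁(R)` -/
  j1 : Ros.X →ₗ[ℂ] L1.X
  j1_inj : Function.Injective j1
  j1_cont : Continuous j1
  j1_dense : DenseRange j1
  /-- the trace duality pairing between `L₁(R)` and `R` -/
  pair1 : L1.X →ₗ[ℂ] Ros.X →ₗ[ℂ] ℂ
  pair1_j1 : ∀ x y, pair1 (j1 x) y = τ (rEquiv x * rEquiv y)
  /-- the noncommutative `L_p`-spaces as operator spaces -/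
  Lp : ℝ → OpSpace
  jp : ∀ p : ℝ, Ros.X →ₗ[ℂ] (Lp p).X
  jp_inj : ∀ p : ℝ, 1 ≤ p → Function.Injective (jp p)
  jp_dense : ∀ p : ℝ, 1 ≤ p → DenseRange (jp p)
  /-- Kosaki–Pisier: `L_p(R) = (R, L₁(R))_{1/p}` completely isometrically
  (with respect to the couple determined by the trace embedding `j₁`) -/
  kosaki : ∀ p : ℝ, 1 < p → ∀ (n : ℕ) (x : Matrix (Fin n) (Fin n) Ros.X),
    (Lp p).matNorm n (matAmp (jp p) n x) =
      interpMatNorm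
        { Z := L1.X, V := Ros, W := L1,
          iV := j1, iW := LinearMap.id,
          iV_inj := j1_inj, iW_inj := fun _ _ h => h,
          iV_cont := j1_cont, iW_cont := continuous_id }
        Set.univ Set.univ (1 / p) n (matAmp j1 n x)

/-- the compatible couple `(R, L₁(R))` -/
def TracialVNSetting.couple (S : TracialVNSetting) : Couple where
  Z := S.L1.X
  V := S.Ros
  W := S.L1
  iV := S.j1
  iW := LinearMap.id
  iV_inj := S.j1_inj
  iW_inj := fun _ _ h => h
  iV_cont := S.j1_cont
  iW_cont := continuous_id

/-- weak*-density of a subset of `R`, with respect to the duality with the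
predual `L₁(R)` -/
def WeakStarDense (S : TracialVNSetting) (B : Set S.R.X) : Prop :=
  ∀ (x : S.R.X) (m : ℕ) (fs : Fin m → S.L1.X) (ε : ℝ), 0 < ε →
    ∃ b ∈ B, ∀ k, ‖
      (S.pair1 (fs k) (S.rEquiv.symm x) - S.pair1 (fs k) (S.rEquiv.symm b))‖ < ε

/-! ### Group von Neumann algebras, Fourier algebras, multipliers and the
Haagerup–Kraus approximation property -/

structure GroupSetting (G : Type) [Group G] : Type 1 where
  /-- the Fourier algebra `A(G) = VN(G)_*`, as an operator space -/
  A : OpSpace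
  /-- elements of `A(G)` are functions on `G` -/
  aFun : A.X →ₗ[ℂ] (G → ℂ)
  aFun_inj : Function.Injective aFun
  /-- finitely supported functions belong to `A(G)` -/
  aFun_finsupp : ∀ f : G →₀ ℂ, ∃ a : A.X, aFun a = ⇑f
  /-- the reduced group C*-algebra `C*_red(G)`, as an operator space -/
  Cr : OpSpace
  /-- the left regular representation `λ` -/
  lam : G → Cr.X
  lam_dense : Dense ((Submodule.span ℂ (Set.range lam) : Submodule ℂ Cr.X) : Set Cr.X)
  /-- the group von Neumann algebra `VN(G)` -/
  VN : CStarAlg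
  lamVN : G → VN.X
  lamVN_mul : ∀ s t : G, lamVN s * lamVN t = lamVN (s * t)
  lamVN_one : lamVN 1 = 1
  lamVN_star : ∀ s : G, star (lamVN s) = lamVN s⁻¹
  inclVN : Cr.X →ₗ[ℂ] VN.X
  inclVN_lam : ∀ s : G, inclVN (lam s) = lamVN s
  inclVN_norm : ∀ x, ‖inclVN x‖ = ‖x‖
  /-- `L₁(VN(G)) = (VN(G)_*)^{op} = κ_*(A(G))`, as an operator space -/
  L1 : OpSpace
  /-- the (bijective) map `κ_* : f ↦ f̌` from `A(G)` onto `L₁(VN(G))` -/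
  check : A.X ≃ₗ[ℂ] L1.X
  /-- `L₁(VN(G))` carries the opposite operator space structure of `A(G)` -/
  check_norm : ∀ (n : ℕ) (x : Matrix (Fin n) (Fin n) A.X),
    L1.matNorm n (fun i j => check (x j i)) = A.matNorm n x
  /-- the trace embedding `j₁ : C*_red(G) → L₁(VN(G))` -/
  j1 : Cr.X →ₗ[ℂ] L1.X
  j1_inj : Function.Injective j1
  j1_cont : Continuous j1
  j1_dense : DenseRange j1
  /-- `j₁(λ(s)) = δ̌_s = κ_*(δ_s)` -/
  j1_lam : ∀ (s : G) (a : A.X),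
    aFun a = (fun t => if t = s then (1 : ℂ) else 0) → j1 (lam s) = check a
  /-- the noncommutative `L_p`-spaces `L_p(VN(G))` -/
  Lp : ℝ → OpSpace
  /-- the canonical dense contractive embeddings `j_p : C*_red(G) → L_p(VN(G))` -/
  jp : ∀ p : ℝ, Cr.X →ₗ[ℂ] (Lp p).X
  jp_dense : ∀ p : ℝ, 1 < p → DenseRange (jp p)
  jp_cb : ∀ p : ℝ, 1 < p → IsCBBound (jp p) 1
  /-- the duality between `L_p` and `L_{p'}` -/
  lpPair : ∀ p q : ℝ, (Lp p).X →ₗ[ℂ] (Lp q).X →ₗ[ℂ] ℂ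
  /-- `⟨j_p(λ(s)), j_{p'}(λ(t))⟩ = τ(λ(s)λ(t))` -/
  lpPair_lam : ∀ p q : ℝ, 1 < p → 1 < q → 1 / p + 1 / q = 1 →
    ∀ s t : G, lpPair p q (jp p (lam s)) (jp q (lam t)) =
      if t = s⁻¹ then 1 else 0
  /-- Kosaki–Pisier: `L_p(VN(G)) = (C*_red(G), L₁(VN(G)))_{1/p}` completely
  isometrically -/
  kosaki : ∀ p : ℝ, 1 < p → ∀ (n : ℕ) (x : Matrix (Fin n) (Fin n) Cr.X),
    (Lp p).matNorm n (matAmp (jp p) n x) =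
      interpMatNorm
        { Z := L1.X, V := Cr, W := L1,
          iV := j1, iW := LinearMap.id,
          iV_inj := j1_inj, iW_inj := fun _ _ h => h,
          iV_cont := j1_cont, iW_cont := continuous_id }
        Set.univ Set.univ (1 / p) n (matAmp j1 n x)
  /-- complex interpolation of a compatible pair of maps on `(C*_red(G), L₁(VN(G)))` -/
  interp : ∀ (Ti : Cr.X →ₗ[ℂ] Cr.X) (To : L1.X →ₗ[ℂ] L1.X),
    j1.comp Ti = To.comp j1 → ∀ p : ℝ, 1 < p → ((Lp p).X →ₗ[ℂ] (Lp p).X)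
  interp_jp : ∀ Ti To h p hp x, interp Ti To h p hp (jp p x) = jp p (Ti x)
  interp_cb : ∀ Ti To h p hp (ci co : ℝ), 0 ≤ ci → 0 ≤ co →
    IsCBBound Ti ci → IsCBBound To co →
    IsCBBound (interp Ti To h p hp) (ci ^ (1 - 1 / p) * co ^ (1 / p))

/-- the compatible couple `(C*_red(G), L₁(VN(G)))` -/
def GroupSetting.couple {G : Type} [Group G] (S : GroupSetting G) : Couple where
  Z := S.L1.X
  V := S.Cr
  W := S.L1
  iV := S.j1
  iW := LinearMap.id
  iV_inj := S.j1_inj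
  iW_inj := fun _ _ h => h
  iV_cont := S.j1_cont
  iW_cont := continuous_id

section Multipliers

variable {G : Type} [Group G]

/-- `m` is the multiplication map `m_φ : A(G) → A(G)` -/
def MultOn (S : GroupSetting G) (φ : G → ℂ) (m : S.A.X →ₗ[ℂ] S.A.X) : Prop :=
  ∀ a : S.A.X, S.aFun (m a) = fun t => φ t * S.aFun a t

/-- `φ` is a completely bounded multiplier of `A(G)`, i.e. `φ ∈ M₀A(G)` -/
def IsMult (S : GroupSetting G) (φ : G → ℂ) : Prop :=
  ∃ m, CompletelyBounded m ∧ MultOn S φ m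

/-- the map `m_φ` for a completely bounded multiplier `φ` -/
noncomputable def multMap (S : GroupSetting G) (φ : G → ℂ) (h : IsMult S φ) :
    S.A.X →ₗ[ℂ] S.A.X := h.choose

/-- the cb norm `‖φ‖_{M₀A(G)} = ‖m_φ‖_cb` of a multiplier -/
noncomputable def multCB (S : GroupSetting G) (φ : G → ℂ) : ℝ :=
  sInf {c | 0 ≤ c ∧ ∃ m, IsCBBound m c ∧ MultOn S φ m}

/-- `M` is the multiplier map `M̄_φ : C*_red(G) → C*_red(G)`,
`M̄_φ(λ(s)) = φ(s) λ(s)` -/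
def CrMultOn (S : GroupSetting G) (φ : G → ℂ) (M : S.Cr.X →ₗ[ℂ] S.Cr.X) : Prop :=
  ∀ s : G, M (S.lam s) = φ s • S.lam s

/-- conjugation `Ť = κ_* ∘ T ∘ κ_*` of a map on `A(G)` into a map
on `L₁(VN(G))` -/
def convMap (S : GroupSetting G) (T : S.A.X →ₗ[ℂ] S.A.X) :
    S.L1.X →ₗ[ℂ] S.L1.X :=
  (S.check.toLinearMap.comp T).comp S.check.symm.toLinearMap

/-- `m` is the multiplier map `m_φ̌ = κ_* ∘ m_φ ∘ κ_*` on `L₁(VN(G))` -/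
def L1MultOn (S : GroupSetting G) (φ : G → ℂ) (m : S.L1.X →ₗ[ℂ] S.L1.X) : Prop :=
  ∀ a b : S.A.X, S.aFun b = (fun t => φ t * S.aFun a t) →
    m (S.check a) = S.check b

/-- `φ ∈ A_c(G)`: a finitely supported element of the Fourier algebra -/
def MemAc (S : GroupSetting G) (φ : G → ℂ) : Prop :=
  (Function.support φ).Finite ∧ ∃ a : S.A.X, S.aFun a = φ

/-- pairing of an `ℓ₁`-type (finitely supported) function with a multiplier -/
def finPair (f : G →₀ ℂ) (φ : G → ℂ) : ℂ :=
  ∑ t ∈ f.support, f t * φ t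

/-- `Ω` belongs to `Q(G)`, the canonical predual of `M₀A(G)`: it is linear on
multipliers, and on the unit ball of `M₀A(G)` it is a uniform limit of pairings
with finitely supported (hence `ℓ₁`) functions, i.e. a `‖·‖_Q`-limit of `ℓ₁(G)`. -/
def MemQ (S : GroupSetting G) (Ω : (G → ℂ) → ℂ) : Prop :=
  (∀ φ ψ, IsMult S φ → IsMult S ψ → Ω (φ + ψ) = Ω φ + Ω ψ) ∧
  (∀ (c : ℂ) (φ), IsMult S φ → Ω (c • φ) = c * Ω φ) ∧
  ∃ f : ℕ → (G →₀ ℂ),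
    Tendsto (fun k => ⨆ φ ∈ {φ : G → ℂ | IsMult S φ ∧ multCB S φ ≤ 1},
        ENNReal.ofReal (‖finPair (f k) φ - Ω φ‖))
      atTop (nhds 0)

/-- the Haagerup–Kraus approximation property (AP): a net `φ_α` in `A_c(G)`
with `m_{φ_α} → id_{A(G)}` in the `σ(M₀A(G), Q(G))` topology (the constant
function `1` corresponds to the identity map). -/
def HasAP (S : GroupSetting G) : Prop :=
  ∃ (ι : Type) (l : Filter ι), l.NeBot ∧ ∃ φs : ι → (G → ℂ),
    (∀ i, MemAc S (φs i)) ∧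
    ∀ Ω : (G → ℂ) → ℂ, MemQ S Ω →
      Tendsto (fun i => Ω (φs i)) l (nhds (Ω fun _ => 1))

/-- weak amenability with constant `c`: a net `φ_α` in `A_c(G)` with
`‖m_{φ_α}‖_cb ≤ c` and `m_{φ_α} → id_{A(G)}` in the point-norm topology -/
def WeaklyAmenableWith (S : GroupSetting G) (c : ℝ) : Prop :=
  ∃ (ι : Type) (l : Filter ι), l.NeBot ∧ ∃ φs : ι → (G → ℂ),
    (∀ i, MemAc S (φs i) ∧ ∃ m, IsCBBound m c ∧ MultOn S (φs i) m) ∧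
    ∀ a : S.A.X, ∃ b : ι → S.A.X,
      (∀ i, S.aFun (b i) = fun t => φs i t * S.aFun a t) ∧
      Tendsto b l (nhds a)

def WeaklyAmenable (S : GroupSetting G) : Prop :=
  ∃ c : ℝ, WeaklyAmenableWith S c

/-- the Cowling–Haagerup constant `Λ(G)` -/
noncomputable def LambdaG (S : GroupSetting G) : ℝ≥0∞ :=
  sInf {e | ∃ c : ℝ, WeaklyAmenableWith S c ∧ e = ENNReal.ofReal c}

/-- the functional `ω̃̃_{a,f} ∈ Q(G)`:
`ω̃̃_{a,f}(φ) = ⟨a, (m_φ ⊗ id_∞)(f)⟩` for `f ∈ A(G) ⊗̌ K_∞` and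
`a ∈ (A(G) ⊗̌ K_∞)^* = VN(G) ⊗̂ T_∞`. -/
noncomputable def omegaTTilde (S : GroupSetting G)
    (f : S.A.stab) (a : S.A.stab →L[ℂ] ℂ) : (G → ℂ) → ℂ :=
  fun φ => if h : IsMult S φ then a (ampImage (multMap S φ h) f) else 0

end Multipliers

/-! ### `COL_p` spaces, completely bounded Schauder bases, residual finiteness -/

/-- `V` is a `COL_p` space: every finite-dimensional subspace is contained in
the range of a factorization `L_p(A) → V → L_p(A)` of the identity of `L_p(A)`
through `V`, for some finite-dimensional C*-algebra `A`, with uniformly bounded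
cb-norms. -/
def IsCOLp (V : OpSpace) (p : ℝ) : Prop :=
  ∃ c : ℝ, 1 ≤ c ∧
    ∀ E : Submodule ℂ V.X, FiniteDimensional ℂ E →
      ∃ T : TracialVNSetting, FiniteDimensional ℂ T.R.X ∧
        ∃ (r : (T.Lp p).X →ₗ[ℂ] V.X) (s : V.X →ₗ[ℂ] (T.Lp p).X),
          CompletelyBounded r ∧ CompletelyBounded s ∧
          cbNorm r * cbNorm s ≤ c ∧
          (E : Set V.X) ⊆ Set.range r ∧
          s.comp r = LinearMap.id

/-- the partial sum projections of a (candidate) Schauder basis -/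
noncomputable def basisProj (V : OpSpace) (x : ℕ → V.X)
    (a : ℕ → (V.X →ₗ[ℂ] ℂ)) (k : ℕ) : V.X →ₗ[ℂ] V.X :=
  ∑ n ∈ Finset.range k, (a n).smulRight (x n)

/-- `V` has a completely bounded Schauder basis: a sequence `xₙ` such that every
`v` has a unique norm convergent expansion `v = Σ aₙ(v) xₙ`, whose partial sum
projections are uniformly completely bounded. -/
def HasCBSchauderBasis (V : OpSpace) : Prop :=
  ∃ (x : ℕ → V.X) (a : ℕ → (V.X →ₗ[ℂ] ℂ)),
    (∀ v : V.X,
      Tendsto (fun k => ∑ n ∈ Finset.range k, a n v • x n) atTop (nhds v)) ∧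
    (∀ (v : V.X) (b : ℕ → ℂ),
      Tendsto (fun k => ∑ n ∈ Finset.range k, b n • x n) atTop (nhds v) →
      ∀ n, b n = a n v) ∧
    ∃ c : ℝ, ∀ k, IsCBBound (basisProj V x a k) c

/-- a discrete group is residually finite if finitely many distinct elements can
be separated by a homomorphism onto a finite group (equivalently, a finite
quotient). -/
def IsResiduallyFinite (G : Type) [Group G] : Prop :=
  ∀ s : Finset G, ∃ N : Subgroup G, N.Normal ∧ Finite (G ⧸ N) ∧
    ∀ x ∈ s, ∀ y ∈ s, (QuotientGroup.mk x : G ⧸ N) = QuotientGroup.mk y → x = y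

/-- the restricted direct product `⨿ₙ Γₙ`: sequences `(gₙ)` with all but
finitely many `gₙ` equal to the identity -/
def restrictedProduct (Γ : ℕ → Type) [∀ n, Group (Γ n)] : Subgroup (∀ n, Γ n) where
  carrier := {f | {n | f n ≠ 1}.Finite}
  one_mem' := by
    have : {n : ℕ | (1 : ∀ n, Γ n) n ≠ 1} = ∅ := by
      ext n; simp
    simp only [Set.mem_setOf_eq, this]
    exact Set.finite_empty
  mul_mem' := by
    intro f g hf hg
    refine (hf.union hg).subset ?_
    intro n hn
    by_contra hc
    simp only [Set.mem_union, Set.mem_setOf_eq, not_or, not_not] at hc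
    exact hn (by simp [Pi.mul_apply, hc.1, hc.2])
  inv_mem' := by
    intro f hf
    refine hf.subset ?_
    intro n hn
    simp only [Set.mem_setOf_eq, Pi.inv_apply, ne_eq] at hn ⊢
    intro h
    exact hn (by simp [h])

/-!
Both sides are continuous linear maps `C*_red(G) → L₁(VN(G))`, since completely bounded maps
are bounded and `κ_*` is isometric. They agree on every `λ(s)`: `j₁(λ(s)) = δ̌_s` and
`m_φ δ_s = φ(s) δ_s`. As `span λ(G)` is dense, they agree everywhere.
-/

theorem IsCBBound.norm_apply_le {V W : OpSpace} {T : V.X →ₗ[ℂ] W.X} {c : ℝ}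
    (hT : IsCBBound T c) (v : V.X) : ‖T v‖ ≤ c * ‖v‖ := by
  have h : W.matNorm 1 (fun _ _ => T v) ≤ c * V.matNorm 1 (fun _ _ => v) := hT 1 _
  rwa [W.matNorm_one, V.matNorm_one] at h

theorem CompletelyBounded.continuous {V W : OpSpace} {T : V.X →ₗ[ℂ] W.X}
    (hT : CompletelyBounded T) : Continuous T :=
  let ⟨c, _, hc⟩ := hT
  AddMonoidHomClass.continuous_of_bound T c hc.norm_apply_le

theorem MultOn.apply_of_aFun_eq_single {G : Type} [Group G] {S : GroupSetting G}
    {φ : G → ℂ} {m : S.A.X →ₗ[ℂ] S.A.X} (hm : MultOn S φ m) {s : G} {a : S.A.X}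
    (ha : S.aFun a = fun t => if t = s then (1 : ℂ) else 0) : m a = φ s • a := by
  apply S.aFun_inj
  rw [hm a, map_smul, ha]
  funext t
  by_cases h : t = s <;> simp [h]

namespace GroupSetting

variable {G : Type} [Group G] (S : GroupSetting G)

theorem norm_check (a : S.A.X) : ‖S.check a‖ = ‖a‖ := by
  simpa only [OpSpace.matNorm_one] using S.check_norm 1 fun _ _ => a

def checkIsometry : S.A.X ≃ₗᵢ[ℂ] S.L1.X :=
  ⟨S.check, S.norm_check⟩

theorem continuous_convMap {T : S.A.X →ₗ[ℂ] S.A.X} (hT : Continuous T) :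
    Continuous (convMap S T) :=
  S.checkIsometry.continuous.comp (hT.comp S.checkIsometry.symm.continuous)

variable {S}

theorem j1_apply_crMult_lam {φ : G → ℂ} {m : S.A.X →ₗ[ℂ] S.A.X} (hm : MultOn S φ m)
    {M : S.Cr.X →ₗ[ℂ] S.Cr.X} (hM : CrMultOn S φ M) (s : G) :
    S.j1 (M (S.lam s)) = convMap S m (S.j1 (S.lam s)) := by
  obtain ⟨a, ha⟩ := S.aFun_finsupp (Finsupp.single s 1)
  have ha' : S.aFun a = fun t => if t = s then (1 : ℂ) else 0 := by
    rw [ha]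
    funext t
    simp [Finsupp.single_apply, eq_comm]
  simp only [hM s, map_smul, S.j1_lam s a ha', convMap, LinearMap.comp_apply,
    LinearEquiv.coe_coe, LinearEquiv.symm_apply_apply, MultOn.apply_of_aFun_eq_single hm ha']

end GroupSetting

/-- `j₁ ∘ M̄_φ = m_{φ̌} ∘ j₁`, i.e. `(M̄_φ, m_{φ̌})` is a
compatible pair on the couple `(C*_red(G), L₁(VN(G)))`. -/
theorem compatible_pair_of_multiplier (G : Type) [Group G] (S : GroupSetting G)
    (φ : G → ℂ) (m : S.A.X →ₗ[ℂ] S.A.X) (hm : CompletelyBounded m)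
    (hmφ : MultOn S φ m) (M : S.Cr.X →ₗ[ℂ] S.Cr.X)
    (hM : CompletelyBounded M) (hMφ : CrMultOn S φ M) :
    S.j1.comp M = (convMap S m).comp S.j1 := by
  let lhs : S.Cr.X →L[ℂ] S.L1.X := ⟨S.j1.comp M, S.j1_cont.comp hM.continuous⟩
  let rhs : S.Cr.X →L[ℂ] S.L1.X :=
    ⟨(convMap S m).comp S.j1, (S.continuous_convMap hm.continuous).comp S.j1_cont⟩
  have h : lhs = rhs := ContinuousLinearMap.ext_on S.lam_dense <| by
    rintro _ ⟨s, rfl⟩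
    exact GroupSetting.j1_apply_crMult_lam hmφ hMφ s
  exact congrArg ContinuousLinearMap.toLinearMap h
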